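/- arXiv:math/0702094 — 2 statements merged into one kernel-verified Lean document; each statement's English description precedes it below -/
import Mathlib

section
/- For all φ, ψ ∈ AS¹(ℝ), both not identically zero, one has ‖φ‖_[ψ] ≤ min{ (sup_t |φ(t)|) · V_ψ , (sup_t |ψ(t)|) · V_φ }. -/
open MeasureTheory Set

noncomputable section

/-- The function `S` of the paper. -/
def Sfun (t : ℝ) : ℝ :=
  if t ≤ -1 then 0
  else if t ≤ 0 then (t + 1) ^ 2 / 2
  else if t ≤ 1 then 1 - (t - 1) ^ 2 / 2
  else 1

/-- The function `Λ` of the paper. -/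
def Lam (t : ℝ) : ℝ := Sfun (t + 1) - Sfun (t - 1)

/-- Almost sigmoidal functions of class `C¹`. -/
def AS1 (φ : ℝ → ℝ) : Prop :=
  ContDiff ℝ 1 φ ∧
    ∃ a b : ℝ, a ≤ b ∧ (∀ t ≤ a, φ t = 0) ∧ ∀ t, b ≤ t → φ t = φ b

/-- Orientation-preserving `C¹`-diffeomorphisms of `ℝ`. -/
def OPDiffeo (h : ℝ → ℝ) : Prop :=
  ContDiff ℝ 1 h ∧ Function.Bijective h ∧
    (∃ g : ℝ → ℝ, ContDiff ℝ 1 g ∧ Function.LeftInverse g h ∧ Function.RightInverse g h) ∧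
    ∀ t, 0 < deriv h t

/-- Total variation `V_φ = ∫ |φ'|`. -/
def totalVar (φ : ℝ → ℝ) : ℝ := ∫ t, |deriv φ t|

/-- A reparametrization invariant norm on `AS¹(ℝ)`. -/
structure IsRPINorm (N : (ℝ → ℝ) → ℝ) : Prop where
  nonneg : ∀ φ, AS1 φ → 0 ≤ N φ
  eq_zero_iff : ∀ φ, AS1 φ → (N φ = 0 ↔ ∀ t, φ t = 0)
  smul : ∀ (c : ℝ) (φ : ℝ → ℝ), AS1 φ → N (fun t => c * φ t) = |c| * N φ
  triangle : ∀ φ ψ : ℝ → ℝ, AS1 φ → AS1 ψ → N (fun t => φ t + ψ t) ≤ N φ + N ψ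
  invariant : ∀ (φ h : ℝ → ℝ), AS1 φ → OPDiffeo h → N (φ ∘ h) = N φ

/-- The standard RPI-norm `‖φ‖_[ψ]`. -/
def stdNorm (ψ φ : ℝ → ℝ) : ℝ :=
  ⨆ h : {h : ℝ → ℝ // OPDiffeo h}, |∫ t, φ (-t) * deriv (ψ ∘ h.1) t|

/-- The function `S_n`. -/
def Sn (n : ℕ) : ℝ → ℝ := fun t => ∑ i ∈ Finset.range n, (-1 : ℝ) ^ i * Sfun (t - 2 * (i : ℝ))

/-- The function `L_n`. -/
def Lfun (n : ℕ) : ℝ → ℝ := fun t => ∑ i ∈ Finset.range n, (-1 : ℝ) ^ i * Lam (t - 4 * (i : ℝ))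

/-- `W` is a separating set for `f`: `f` is monotone on each connected component of `ℝ \ W`. -/
def IsSepSet (f : ℝ → ℝ) (W : Finset ℝ) : Prop :=
  ∀ t, t ∉ (W : Set ℝ) →
    MonotoneOn f (connectedComponentIn ((W : Set ℝ)ᶜ) t) ∨
      AntitoneOn f (connectedComponentIn ((W : Set ℝ)ᶜ) t)

/-- `f` is piecewise monotone. -/
def PiecewiseMonotone (f : ℝ → ℝ) : Prop := ∃ W : Finset ℝ, IsSepSet f W

/-- `l(f)`: the minimum cardinality of a separating set for `f`. -/
def lval (f : ℝ → ℝ) : ℕ := sInf {n : ℕ | ∃ W : Finset ℝ, W.card = n ∧ IsSepSet f W}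

/-!
For an orientation-preserving diffeomorphism `h`, the function `ξ = ψ ∘ h` is again in `AS¹(ℝ)`,
with `sup |ξ| = sup |ψ|` and, by the change of variables `u = h t`, `V_ξ = V_ψ`.
Bounding `φ(-t)` by `sup |φ|` in `∫ φ(-t) ξ'(t) dt` gives the first bound; integrating by parts
first (there are no boundary terms, since `φ(-t) ξ(t)` vanishes near `±∞`) and then bounding
`ξ` by `sup |ξ|` gives the second.
-/

open Filter Topology

lemma abs_integral_mul_le_mul_integral_abs {α : Type*} [MeasurableSpace α] {μ : Measure α}
    {f g : α → ℝ} {M : ℝ} (hf : ∀ t, |f t| ≤ M) (hg : Integrable g μ) :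
    |∫ t, f t * g t ∂μ| ≤ M * ∫ t, |g t| ∂μ := by
  rw [← integral_const_mul M fun t => |g t|]
  refine norm_integral_le_of_norm_le (f := fun t => f t * g t) (hg.abs.const_mul M)
    (ae_of_all _ fun t => ?_)
  rw [Real.norm_eq_abs, abs_mul]
  exact mul_le_mul_of_nonneg_right (hf t) (abs_nonneg _)

lemma totalVar_comp {ψ h : ℝ → ℝ} (hψ : Differentiable ℝ ψ) (hh : Differentiable ℝ h)
    (hbij : Function.Bijective h) : totalVar (ψ ∘ h) = totalVar ψ := by
  have hchg := integral_image_eq_integral_abs_deriv_smul MeasurableSet.univ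
    (fun t _ => (hh t).hasDerivAt.hasDerivWithinAt) hbij.1.injOn (fun u => |deriv ψ u|)
  rw [image_univ, hbij.2.range_eq, Measure.restrict_univ] at hchg
  rw [totalVar, totalVar, hchg]
  congr 1 with t
  rw [deriv_comp t (hψ (h t)) (hh t), abs_mul, smul_eq_mul, mul_comm]

lemma totalVar_nonneg (φ : ℝ → ℝ) : 0 ≤ totalVar φ :=
  integral_nonneg fun _ => abs_nonneg _

lemma OPDiffeo.strictMono {h : ℝ → ℝ} (hh : OPDiffeo h) : StrictMono h :=
  strictMono_of_deriv_pos hh.2.2.2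

namespace AS1

variable {φ ξ : ℝ → ℝ}

lemma differentiable (hφ : AS1 φ) : Differentiable ℝ φ :=
  hφ.1.differentiable one_ne_zero

lemma continuous_deriv (hφ : AS1 φ) : Continuous (deriv φ) :=
  hφ.1.continuous_deriv le_rfl

lemma eventually_atBot_eq_zero (hφ : AS1 φ) : ∀ᶠ t in atBot, φ t = 0 := by
  obtain ⟨-, a, -, -, h0, -⟩ := hφ
  exact eventually_atBot.2 ⟨a, h0⟩

lemma bddAbove_range_abs (hφ : AS1 φ) : BddAbove (range fun t => |φ t|) := by
  obtain ⟨hc, a, b, hab, h0, hconst⟩ := hφ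
  refine ((isCompact_Icc (a := a) (b := b)).image hc.continuous.abs).bddAbove.mono ?_
  rintro - ⟨t, rfl⟩
  rcases le_total t a with hta | hat
  · exact ⟨a, ⟨le_rfl, hab⟩, by simp only [h0 a le_rfl, h0 t hta]⟩
  rcases le_total t b with htb | hbt
  · exact ⟨t, ⟨hat, htb⟩, rfl⟩
  · exact ⟨b, ⟨hab, le_rfl⟩, by simp only [hconst t hbt]⟩

lemma abs_le_iSup_abs (hφ : AS1 φ) (t : ℝ) : |φ t| ≤ ⨆ s, |φ s| :=
  le_ciSup hφ.bddAbove_range_abs t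

lemma iSup_abs_nonneg (hφ : AS1 φ) : 0 ≤ ⨆ s, |φ s| :=
  (abs_nonneg _).trans (hφ.abs_le_iSup_abs 0)

lemma hasCompactSupport_deriv (hφ : AS1 φ) : HasCompactSupport (deriv φ) := by
  obtain ⟨-, a, b, -, h0, hconst⟩ := hφ
  refine HasCompactSupport.intro (isCompact_Icc (a := a) (b := b)) fun t ht => ?_
  rcases not_and_or.1 ht with hat | hbt
  · have : φ =ᶠ[𝓝 t] fun _ => 0 :=
      eventually_of_mem (Iio_mem_nhds (not_le.1 hat)) fun s hs => h0 s hs.le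
    rw [this.deriv_eq, deriv_const]
  · have : φ =ᶠ[𝓝 t] fun _ => φ b :=
      eventually_of_mem (Ioi_mem_nhds (not_le.1 hbt)) fun s hs => hconst s hs.le
    rw [this.deriv_eq, deriv_const]

lemma integrable_deriv (hφ : AS1 φ) : Integrable (deriv φ) :=
  hφ.continuous_deriv.integrable_of_hasCompactSupport hφ.hasCompactSupport_deriv

lemma comp {h : ℝ → ℝ} (hφ : AS1 φ) (hh : OPDiffeo h) : AS1 (φ ∘ h) := by
  obtain ⟨hcφ, a, b, hab, h0, hconst⟩ := hφ
  have hmono := hh.strictMono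
  obtain ⟨hch, hbij, -, -⟩ := hh
  obtain ⟨a', rfl⟩ := hbij.2 a
  obtain ⟨b', rfl⟩ := hbij.2 b
  refine ⟨hcφ.comp hch, a', b', hmono.le_iff_le.1 hab, fun t ht => h0 _ (hmono.monotone ht),
    fun t ht => hconst _ (hmono.monotone ht)⟩

lemma integral_mul_deriv_eq_deriv_mul (hφ : AS1 φ) (hξ : AS1 ξ) :
    ∫ t, φ (-t) * deriv ξ t = ∫ t, deriv φ (-t) * ξ t := by
  have hu : ∀ t, HasDerivAt (fun s => φ (-s)) (-deriv φ (-t)) t := fun t => by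
    simpa [mul_comm, Function.comp_def] using
      (hφ.differentiable (-t)).hasDerivAt.comp t (hasDerivAt_neg t)
  have hbot : (fun t => φ (-t)) * ξ =ᶠ[atBot] 0 := by
    filter_upwards [hξ.eventually_atBot_eq_zero] with t ht
    simp [ht]
  have htop : (fun t => φ (-t)) * ξ =ᶠ[atTop] 0 := by
    filter_upwards [tendsto_neg_atTop_atBot.eventually hφ.eventually_atBot_eq_zero] with t ht
    simp [ht]
  have hdφ_neg : Continuous fun t => deriv φ (-t) := hφ.continuous_deriv.comp continuous_neg
  have hcs_neg : HasCompactSupport fun t => deriv φ (-t) := by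
    simpa [Function.comp_def] using
      hφ.hasCompactSupport_deriv.comp_homeomorph (Homeomorph.neg ℝ)
  have ibp := MeasureTheory.integral_mul_deriv_eq_deriv_mul (fun t _ => hu t)
    (fun t _ => (hξ.differentiable t).hasDerivAt)
    (((hφ.1.continuous.comp continuous_neg).mul hξ.continuous_deriv).integrable_of_hasCompactSupport
      hξ.hasCompactSupport_deriv.mul_left)
    ((hdφ_neg.neg.mul hξ.1.continuous).integrable_of_hasCompactSupport hcs_neg.neg.mul_right)
    (tendsto_const_nhds.congr' hbot.symm) (tendsto_const_nhds.congr' htop.symm)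
  simpa [integral_neg] using ibp

lemma abs_integral_mul_deriv_le_iSup_left (hφ : AS1 φ) (hξ : AS1 ξ) :
    |∫ t, φ (-t) * deriv ξ t| ≤ (⨆ t, |φ t|) * totalVar ξ :=
  abs_integral_mul_le_mul_integral_abs (fun t => hφ.abs_le_iSup_abs (-t)) hξ.integrable_deriv

lemma abs_integral_mul_deriv_le_iSup_right (hφ : AS1 φ) (hξ : AS1 ξ) :
    |∫ t, φ (-t) * deriv ξ t| ≤ (⨆ t, |ξ t|) * totalVar φ := by
  have hint : Integrable fun t => deriv φ (-t) := hφ.integrable_deriv.comp_neg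
  rw [hφ.integral_mul_deriv_eq_deriv_mul hξ, totalVar,
    ← integral_neg_eq_self (fun t => |deriv φ t|)]
  simp_rw [mul_comm (deriv φ _)]
  exact abs_integral_mul_le_mul_integral_abs hξ.abs_le_iSup_abs hint

end AS1

theorem statement9_general (φ ψ : ℝ → ℝ) (hφ : AS1 φ) (hψ : AS1 ψ) :
    stdNorm ψ φ ≤ min ((⨆ t, |φ t|) * totalVar ψ) ((⨆ t, |ψ t|) * totalVar φ) := by
  refine Real.iSup_le (fun ⟨h, hh⟩ => le_min ?_ ?_) (le_min
    (mul_nonneg hφ.iSup_abs_nonneg (totalVar_nonneg ψ))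
    (mul_nonneg hψ.iSup_abs_nonneg (totalVar_nonneg φ)))
  · rw [← totalVar_comp hψ.differentiable (hh.1.differentiable one_ne_zero) hh.2.1]
    exact hφ.abs_integral_mul_deriv_le_iSup_left (hψ.comp hh)
  · rw [← hh.2.1.2.iSup_comp fun t => |ψ t|]
    exact hφ.abs_integral_mul_deriv_le_iSup_right (hψ.comp hh)

theorem statement9 (φ ψ : ℝ → ℝ) (hφ : AS1 φ) (hψ : AS1 ψ)
    (hφ0 : ¬ ∀ t, φ t = 0) (hψ0 : ¬ ∀ t, ψ t = 0) :
    stdNorm ψ φ ≤ min ((⨆ t, |φ t|) * totalVar ψ) ((⨆ t, |ψ t|) * totalVar φ) :=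
  statement9_general φ ψ hφ hψ
end
end

section
/- For every φ ∈ AS¹(ℝ) one has ‖φ‖_[S] = sup_t |φ(t)| (the L∞-norm is a standard RPI-norm). -/
/-!
`S` is the primitive of the tent `max (1 - |t|) 0`, so for every orientation-preserving
diffeomorphism `h` the derivative of `S ∘ h` is a continuous, compactly supported probability
density. Pairing `φ(-·)` with a probability density is a weighted average, bounded by
`sup |φ|`. Conversely, for the affine maps `h t = (t + t₀) / δ` this density is concentrated in
the `δ`-neighbourhood of `-t₀`, so the pairing tends to `φ t₀` as `δ → 0`.
-/

open MeasureTheory Set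

noncomputable section

open Filter Topology

lemma abs_integral_mul_le_of_integral_eq_one {α : Type*} [MeasurableSpace α] {μ : Measure α}
    {f g : α → ℝ} {M : ℝ} (hg : Integrable g μ) (hg0 : ∀ x, 0 ≤ g x)
    (hg1 : ∫ x, g x ∂μ = 1) (hf : ∀ x, g x ≠ 0 → |f x| ≤ M) :
    |∫ x, f x * g x ∂μ| ≤ M := by
  have hbound : ∀ x, ‖f x * g x‖ ≤ M * g x := fun x => by
    rw [Real.norm_eq_abs, abs_mul, abs_of_nonneg (hg0 x)]
    rcases eq_or_ne (g x) 0 with h0 | h0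
    · simp [h0]
    · exact mul_le_mul_of_nonneg_right (hf x h0) (hg0 x)
  calc |∫ x, f x * g x ∂μ| ≤ ∫ x, M * g x ∂μ :=
        norm_integral_le_of_norm_le (hg.const_mul M) (Eventually.of_forall hbound)
    _ = M := by rw [integral_const_mul, hg1, mul_one]

lemma abs_integral_mul_sub_le_of_integral_eq_one {α : Type*} [MeasurableSpace α]
    {μ : Measure α} {f g : α → ℝ} {c ε : ℝ} (hfg : Integrable (fun x => f x * g x) μ)
    (hg : Integrable g μ) (hg0 : ∀ x, 0 ≤ g x) (hg1 : ∫ x, g x ∂μ = 1)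
    (hf : ∀ x, g x ≠ 0 → |f x - c| ≤ ε) :
    |∫ x, f x * g x ∂μ - c| ≤ ε := by
  have hsub : ∫ x, f x * g x ∂μ - c = ∫ x, (f x - c) * g x ∂μ := by
    simp_rw [sub_mul]
    rw [integral_sub hfg (hg.const_mul c), integral_const_mul, hg1, mul_one]
  rw [hsub]
  exact abs_integral_mul_le_of_integral_eq_one hg hg0 hg1 hf

def tent (t : ℝ) : ℝ := max (1 - |t|) 0

lemma tent_nonneg (t : ℝ) : 0 ≤ tent t := le_max_right _ _

lemma continuous_tent : Continuous tent := by
  unfold tent; fun_prop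

lemma abs_lt_one_of_tent_ne_zero {t : ℝ} (ht : tent t ≠ 0) : |t| < 1 := by
  by_contra! h
  exact ht (max_eq_right (by linarith))

lemma tent_eq_sum_max_zero (t : ℝ) : tent t = max (t + 1) 0 - 2 * max t 0 + max (t - 1) 0 := by
  simp only [tent, abs_eq_max_neg, max_def]
  split_ifs <;> linarith

lemma hasDerivAt_sq_max_zero_div_two (x : ℝ) :
    HasDerivAt (fun y : ℝ => max y 0 ^ 2 / 2) (max x 0) x := by
  refine hasDerivAt_of_hasDerivAt_of_ne' (g := fun y => max y 0) (x := 0) (fun y hy => ?_)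
    (by fun_prop) (by fun_prop) x
  rcases hy.lt_or_gt with hy | hy
  · rw [max_eq_right hy.le]
    refine (hasDerivAt_const y (0 : ℝ)).congr_of_eventuallyEq ?_
    filter_upwards [eventually_lt_nhds hy] with z hz
    simp [max_eq_right hz.le]
  · rw [max_eq_left hy.le]
    refine (by simpa using (hasDerivAt_pow 2 y).div_const 2 :
      HasDerivAt (fun y : ℝ => y ^ 2 / 2) y y).congr_of_eventuallyEq ?_
    filter_upwards [eventually_gt_nhds hy] with z hz
    simp [max_eq_left hz.le]

-- `S` and its derivative are the same second difference of `(t⁺)² / 2` and of `t⁺`.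
lemma Sfun_eq_sum_sq_max_zero (t : ℝ) :
    Sfun t = max (t + 1) 0 ^ 2 / 2 - 2 * (max t 0 ^ 2 / 2) + max (t - 1) 0 ^ 2 / 2 := by
  unfold Sfun
  simp only [max_def]
  split_ifs <;> first | ring1 | (exfalso; linarith)

lemma hasDerivAt_Sfun (t : ℝ) : HasDerivAt Sfun (tent t) t := by
  have hq := hasDerivAt_sq_max_zero_div_two
  rw [funext Sfun_eq_sum_sq_max_zero, tent_eq_sum_max_zero]
  exact (((hq (t + 1)).comp_add_const t 1).sub (((hq t).const_mul 2))).add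
    ((hq (t - 1)).comp_sub_const t 1)

lemma tendsto_Sfun_atBot : Tendsto Sfun atBot (𝓝 0) := by
  refine tendsto_const_nhds.congr' ?_
  filter_upwards [eventually_le_atBot (-1)] with t ht
  simp [Sfun, ht]

lemma tendsto_Sfun_atTop : Tendsto Sfun atTop (𝓝 1) := by
  refine tendsto_const_nhds.congr' ?_
  filter_upwards [eventually_gt_atTop 1] with t ht
  simp [Sfun, show ¬t ≤ -1 by linarith, show ¬t ≤ 0 by linarith, show ¬t ≤ 1 by linarith]

lemma hasDerivAt_Sfun_comp {h : ℝ → ℝ} {t : ℝ} (hh : DifferentiableAt ℝ h t) :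
    HasDerivAt (Sfun ∘ h) (tent (h t) * deriv h t) t :=
  (hasDerivAt_Sfun (h t)).comp t hh.hasDerivAt

lemma abs_lt_one_of_deriv_Sfun_comp_ne_zero {h : ℝ → ℝ} {t : ℝ} (hh : DifferentiableAt ℝ h t)
    (ht : deriv (Sfun ∘ h) t ≠ 0) : |h t| < 1 := by
  rw [(hasDerivAt_Sfun_comp hh).deriv] at ht
  exact abs_lt_one_of_tent_ne_zero (left_ne_zero_of_mul ht)

namespace OPDiffeo

variable {h : ℝ → ℝ}

lemma differentiable (hh : OPDiffeo h) : Differentiable ℝ h :=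
  hh.1.differentiable one_ne_zero

lemma strictMono_s10 (hh : OPDiffeo h) : StrictMono h :=
  strictMono_of_deriv_pos hh.2.2.2

lemma deriv_Sfun_comp_nonneg (hh : OPDiffeo h) (t : ℝ) : 0 ≤ deriv (Sfun ∘ h) t := by
  rw [(hasDerivAt_Sfun_comp (hh.differentiable t)).deriv]
  exact mul_nonneg (tent_nonneg _) (hh.2.2.2 t).le

lemma continuous_deriv_Sfun_comp (hh : OPDiffeo h) : Continuous (deriv (Sfun ∘ h)) := by
  rw [funext fun t => (hasDerivAt_Sfun_comp (hh.differentiable t)).deriv]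
  exact (continuous_tent.comp hh.1.continuous).mul (hh.1.continuous_deriv le_rfl)

lemma hasCompactSupport_deriv_Sfun_comp (hh : OPDiffeo h) :
    HasCompactSupport (deriv (Sfun ∘ h)) := by
  obtain ⟨a, ha⟩ := hh.2.1.2 (-1)
  obtain ⟨b, hb⟩ := hh.2.1.2 1
  refine HasCompactSupport.intro (isCompact_Icc (a := a) (b := b)) fun t ht => ?_
  by_contra hne
  have hlt := abs_lt_one_of_deriv_Sfun_comp_ne_zero (hh.differentiable t) hne
  exact ht ⟨hh.strictMono_s10.le_iff_le.1 (by rw [ha]; linarith [(abs_lt.1 hlt).1]),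
    hh.strictMono_s10.le_iff_le.1 (by rw [hb]; linarith [(abs_lt.1 hlt).2])⟩

lemma integrable_deriv_Sfun_comp (hh : OPDiffeo h) : Integrable (deriv (Sfun ∘ h)) :=
  hh.continuous_deriv_Sfun_comp.integrable_of_hasCompactSupport
    hh.hasCompactSupport_deriv_Sfun_comp

lemma integral_deriv_Sfun_comp (hh : OPDiffeo h) : ∫ t, deriv (Sfun ∘ h) t = 1 := by
  have hsurj : ∀ s, ∃ t, h t = s := hh.2.1.2
  have hbot : Tendsto h atBot atBot :=
    tendsto_atBot_atBot_of_monotone hh.strictMono_s10.monotone fun s =>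
      (hsurj s).imp fun _ ht => ht.le
  have htop : Tendsto h atTop atTop :=
    tendsto_atTop_atTop_of_monotone hh.strictMono_s10.monotone fun s =>
      (hsurj s).imp fun _ ht => ht.ge
  rw [integral_of_hasDerivAt_of_tendsto
    (fun t => (hasDerivAt_Sfun_comp (hh.differentiable t)).differentiableAt.hasDerivAt)
    hh.integrable_deriv_Sfun_comp (tendsto_Sfun_atBot.comp hbot) (tendsto_Sfun_atTop.comp htop)]
  norm_num

end OPDiffeo

lemma opDiffeo_affine {a : ℝ} (ha : 0 < a) (b : ℝ) : OPDiffeo (fun t => a * t + b) := by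
  have hl : Function.LeftInverse (fun s => (s - b) / a) (fun t => a * t + b) := fun t => by
    field_simp; ring
  have hr : Function.RightInverse (fun s => (s - b) / a) (fun t => a * t + b) := fun s => by
    field_simp; ring
  refine ⟨by fun_prop, ⟨hl.injective, hr.surjective⟩, ⟨_, by fun_prop, hl, hr⟩, fun t => ?_⟩
  simpa using ha

lemma abs_integral_mul_deriv_Sfun_comp_le {φ h : ℝ → ℝ} {M : ℝ} (hM : ∀ t, |φ t| ≤ M)
    (hh : OPDiffeo h) : |∫ t, φ (-t) * deriv (Sfun ∘ h) t| ≤ M :=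
  abs_integral_mul_le_of_integral_eq_one hh.integrable_deriv_Sfun_comp
    hh.deriv_Sfun_comp_nonneg hh.integral_deriv_Sfun_comp fun t _ => hM (-t)

lemma stdNorm_Sfun_le {φ : ℝ → ℝ} {M : ℝ} (hM : ∀ t, |φ t| ≤ M) : stdNorm Sfun φ ≤ M :=
  haveI : Nonempty {h : ℝ → ℝ // OPDiffeo h} := ⟨⟨_, opDiffeo_affine one_pos 0⟩⟩
  ciSup_le fun h => abs_integral_mul_deriv_Sfun_comp_le hM h.2

lemma abs_le_stdNorm_Sfun {φ : ℝ → ℝ} {M : ℝ} (hφ : Continuous φ) (hM : ∀ t, |φ t| ≤ M)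
    (t₀ : ℝ) : |φ t₀| ≤ stdNorm Sfun φ := by
  have hbdd : BddAbove (range fun h : {h : ℝ → ℝ // OPDiffeo h} =>
      |∫ t, φ (-t) * deriv (Sfun ∘ h.1) t|) :=
    ⟨M, forall_mem_range.2 fun h => abs_integral_mul_deriv_Sfun_comp_le hM h.2⟩
  refine le_of_forall_pos_le_add fun ε hε => ?_
  obtain ⟨δ, hδ, hφδ⟩ := Metric.continuous_iff.1 hφ t₀ ε hε
  set h : ℝ → ℝ := fun t => δ⁻¹ * t + δ⁻¹ * t₀
  have hh : OPDiffeo h := opDiffeo_affine (inv_pos.2 hδ) _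
  have hg := hh.integrable_deriv_Sfun_comp
  set I := ∫ t, φ (-t) * deriv (Sfun ∘ h) t
  have hle : |I| ≤ stdNorm Sfun φ := le_ciSup hbdd ⟨h, hh⟩
  have hclose : |I - φ t₀| ≤ ε := by
    refine abs_integral_mul_sub_le_of_integral_eq_one
      (hg.bdd_mul (by fun_prop : Continuous fun t => φ (-t)).aestronglyMeasurable
        (Eventually.of_forall fun t => hM (-t)))
      hg hh.deriv_Sfun_comp_nonneg hh.integral_deriv_Sfun_comp fun t ht => ?_
    have hlt : |δ⁻¹ * (t + t₀)| < 1 := by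
      simpa only [h, mul_add] using abs_lt_one_of_deriv_Sfun_comp_ne_zero (hh.differentiable t) ht
    rw [abs_mul, abs_inv, abs_of_pos hδ, inv_mul_lt_iff₀ hδ, mul_one] at hlt
    refine (hφδ (-t) ?_).le
    rwa [Real.dist_eq, ← abs_neg, neg_sub, sub_neg_eq_add, add_comm]
  linarith [abs_sub_abs_le_abs_sub (φ t₀) I, abs_sub_comm I (φ t₀)]

lemma AS1.bddAbove_range_abs_s10 {φ : ℝ → ℝ} (hφ : AS1 φ) : BddAbove (range fun t => |φ t|) := by
  obtain ⟨hC, a, b, hab, hza, hconst⟩ := hφ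
  refine ((isCompact_Icc (a := a) (b := b)).bddAbove_image hC.continuous.abs.continuousOn).mono ?_
  rintro _ ⟨t, rfl⟩
  rcases le_total t a with hta | hat
  · exact ⟨a, ⟨le_rfl, hab⟩, by simp [hza t hta, hza a le_rfl]⟩
  rcases le_total t b with htb | hbt
  · exact ⟨t, ⟨hat, htb⟩, rfl⟩
  · exact ⟨b, ⟨hab, le_rfl⟩, by simp [hconst t hbt]⟩

theorem statement10 (φ : ℝ → ℝ) (hφ : AS1 φ) :
    stdNorm Sfun φ = ⨆ t, |φ t| := by
  have hM : ∀ t, |φ t| ≤ ⨆ t, |φ t| := le_ciSup hφ.bddAbove_range_abs_s10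
  exact le_antisymm (stdNorm_Sfun_le hM) (ciSup_le (abs_le_stdNorm_Sfun hφ.1.continuous hM))
end
end
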